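/- Let M be a k-sheaf on a directed moment graph G with vertex set V (partially ordered by reachability, with all sets {≥ x} having the property that the graph structure is as in a moment graph). The following conditions are equivalent: (1) for all open subsets J' ⊆ J of V, the restriction map Γ(J, M) → Γ(J', M) is surjective; (2) for every vertex x ∈ V, the restriction map Γ({≥x}, M) → Γ({>x}, M) is surjective; (3) for every vertex x ∈ V, the image of the map d_x : M^x → ⊕_{E ∈ E_{δx}} M^E contains the submodule M^{δx} := u_x(Γ({>x}, M)). -/

import Mathlib

/-!
A section over an open set is extended to all of `V` one vertex at a time, each time adding a
maximal vertex `x` outside the current open set, so that `{>x}` is already covered. Since every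
edge out of `x` ends in `{>x}`, a section `m` extends over `x` exactly when some `a ∈ M^x`
satisfies `ρ_{x,E} a = ρ_{y,E} m_y` for all edges `E : x → y`, which is condition (3); restricting
a section over `{≥x}` shows that (2) provides such an `a`.
-/

open MvPolynomial

/-- A directed moment graph over the lattice `Fin r → ℤ`, on a vertex set `V`
partially ordered by the reachability relation (so each directed edge has source
strictly smaller than its target). -/
structure DirMomentGraph (V : Type) [PartialOrder V] (r : ℕ) where
  E : Type
  src : E → V
  tgt : E → V
  src_lt_tgt : ∀ e, src e < tgt e
  label : E → (Fin r → ℤ)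
  label_ne_zero : ∀ e, label e ≠ 0

/-- A subset of the vertices is open if it is upward closed. -/
def IsOpenSubset {V : Type} [PartialOrder V] (J : Set V) : Prop :=
  ∀ ⦃y z : V⦄, y ∈ J → y ≤ z → z ∈ J

section

variable (k : Type) [CommRing k] {V : Type} [PartialOrder V] [Fintype V] {r : ℕ}
  (G : DirMomentGraph V r)
  (MV : V → Type) [∀ x, AddCommGroup (MV x)] [∀ x, Module (MvPolynomial (Fin r) k) (MV x)]
  (ME : G.E → Type) [∀ e, AddCommGroup (ME e)] [∀ e, Module (MvPolynomial (Fin r) k) (ME e)]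
  (ρs : ∀ e : G.E, MV (G.src e) →ₗ[MvPolynomial (Fin r) k] ME e)
  (ρt : ∀ e : G.E, MV (G.tgt e) →ₗ[MvPolynomial (Fin r) k] ME e)

/-- The space of sections of a sheaf over a subset `I` of the set of vertices. -/
def sections (I : Set V) : Set (∀ x, MV x) :=
  {m | ∀ e : G.E, G.src e ∈ I → G.tgt e ∈ I → ρs e (m (G.src e)) = ρt e (m (G.tgt e))}

end

section

variable {V : Type} [PartialOrder V]

theorem isOpenSubset_Ici (x : V) : IsOpenSubset (Set.Ici x) :=
  fun _ _ hy hyz => le_trans hy hyz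

theorem isOpenSubset_Ioi (x : V) : IsOpenSubset (Set.Ioi x) :=
  fun _ _ hy hyz => lt_of_lt_of_le hy hyz

theorem IsOpenSubset.insert {J : Set V} (hJ : IsOpenSubset J) {x : V} (hxJ : Set.Ioi x ⊆ J) :
    IsOpenSubset (insert x J) := by
  rintro y z (rfl | hy) hyz
  · rcases hyz.eq_or_lt with rfl | hlt
    · exact Set.mem_insert _ _
    · exact Set.mem_insert_of_mem _ (hxJ hlt)
  · exact Set.mem_insert_of_mem _ (hJ hy hyz)

theorem Ioi_subset_of_maximal_compl {J : Set V} {x : V} (hx : Maximal (· ∈ Jᶜ) x) :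
    Set.Ioi x ⊆ J := by
  intro z hz
  by_contra hzJ
  exact hz.not_ge (hx.2 hzJ hz.le)

variable (k : Type) [CommRing k] {r : ℕ} (G : DirMomentGraph V r)
  (MV : V → Type) [∀ x, AddCommGroup (MV x)] [∀ x, Module (MvPolynomial (Fin r) k) (MV x)]
  (ME : G.E → Type) [∀ e, AddCommGroup (ME e)] [∀ e, Module (MvPolynomial (Fin r) k) (ME e)]
  (ρs : ∀ e : G.E, MV (G.src e) →ₗ[MvPolynomial (Fin r) k] ME e)
  (ρt : ∀ e : G.E, MV (G.tgt e) →ₗ[MvPolynomial (Fin r) k] ME e)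

local notation "Γ" => sections k G MV ME ρs ρt

def RestrictionSurjective (J J' : Set V) : Prop :=
  ∀ m' ∈ Γ J', ∃ m ∈ Γ J, ∀ y ∈ J', m y = m' y

/-- `d_x a = u_x m` in the notation of the paper. -/
def EdgeCompatible (x : V) (a : MV x) (m : ∀ y, MV y) : Prop :=
  ∀ (e : G.E) (h : G.src e = x), ρs e (cast (congrArg MV h.symm) a) = ρt e (m (G.tgt e))

variable {k G MV ME ρs ρt}

theorem sections_anti {I I' : Set V} (h : I ⊆ I') : Γ I' ⊆ Γ I :=
  fun _ hm e hs ht => hm e (h hs) (h ht)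

theorem RestrictionSurjective.trans {J₁ J₂ J₃ : Set V}
    (h₁₂ : RestrictionSurjective k G MV ME ρs ρt J₁ J₂)
    (h₂₃ : RestrictionSurjective k G MV ME ρs ρt J₂ J₃) (h₃₂ : J₃ ⊆ J₂) :
    RestrictionSurjective k G MV ME ρs ρt J₁ J₃ := by
  intro m₃ hm₃
  obtain ⟨m₂, hm₂, h₂⟩ := h₂₃ m₃ hm₃
  obtain ⟨m₁, hm₁, h₁⟩ := h₁₂ m₂ hm₂
  exact ⟨m₁, hm₁, fun y hy => (h₁ y (h₃₂ hy)).trans (h₂ y hy)⟩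

theorem RestrictionSurjective.of_superset {J J₁ J' : Set V} (hJ : J ⊆ J₁)
    (h : RestrictionSurjective k G MV ME ρs ρt J₁ J') :
    RestrictionSurjective k G MV ME ρs ρt J J' := by
  intro m' hm'
  obtain ⟨m, hm, hmm'⟩ := h m' hm'
  exact ⟨m, sections_anti hJ hm, hmm'⟩

theorem edgeCompatible_of_eqOn_Ioi {x : V} {m m' : ∀ y, MV y} (hm : m ∈ Γ (Set.Ici x))
    (hmm' : ∀ y, x < y → m y = m' y) : EdgeCompatible k G MV ME ρs ρt x (m x) m' := by
  intro e h
  subst h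
  rw [cast_eq, ← hmm' _ (G.src_lt_tgt e)]
  exact hm e le_rfl (G.src_lt_tgt e).le

theorem RestrictionSurjective.exists_edgeCompatible {x : V}
    (h : RestrictionSurjective k G MV ME ρs ρt (Set.Ici x) (Set.Ioi x)) :
    ∀ m ∈ Γ (Set.Ioi x), ∃ a, EdgeCompatible k G MV ME ρs ρt x a m := by
  intro m' hm'
  obtain ⟨m, hm, hmm'⟩ := h m' hm'
  exact ⟨m x, edgeCompatible_of_eqOn_Ioi hm hmm'⟩

theorem update_mem_sections_insert [DecidableEq V] {J : Set V} (hJ : IsOpenSubset J) {x : V}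
    (hx : x ∉ J) {m : ∀ y, MV y} (hm : m ∈ Γ J) {a : MV x}
    (ha : EdgeCompatible k G MV ME ρs ρt x a m) : Function.update m x a ∈ Γ (insert x J) := by
  intro e hs _
  have htx : G.tgt e ≠ x := by
    rintro rfl
    rcases hs with hsx | hsJ
    · exact (G.src_lt_tgt e).ne hsx
    · exact hx (hJ hsJ (G.src_lt_tgt e).le)
  rw [Function.update_of_ne htx]
  by_cases hsx : G.src e = x
  · subst hsx
    rw [Function.update_self]
    exact ha e rfl
  · have hsJ : G.src e ∈ J := hs.resolve_left hsx
    rw [Function.update_of_ne hsx]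
    exact hm e hsJ (hJ hsJ (G.src_lt_tgt e).le)

theorem restrictionSurjective_insert {x : V}
    (h : ∀ m ∈ Γ (Set.Ioi x), ∃ a, EdgeCompatible k G MV ME ρs ρt x a m)
    {J : Set V} (hJ : IsOpenSubset J) (hx : x ∉ J) (hxJ : Set.Ioi x ⊆ J) :
    RestrictionSurjective k G MV ME ρs ρt (insert x J) J := by
  classical
  intro m hm
  obtain ⟨a, ha⟩ := h m (sections_anti hxJ hm)
  refine ⟨Function.update m x a, update_mem_sections_insert hJ hx hm ha,
    fun y hy => Function.update_of_ne ?_ a m⟩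
  rintro rfl
  exact hx hy

theorem restrictionSurjective_univ [Finite V]
    (h : ∀ x, ∀ m ∈ Γ (Set.Ioi x), ∃ a, EdgeCompatible k G MV ME ρs ρt x a m)
    {J : Set V} (hJ : IsOpenSubset J) : RestrictionSurjective k G MV ME ρs ρt Set.univ J := by
  induction J using WellFoundedGT.induction with
  | _ J ih =>
    rcases Jᶜ.eq_empty_or_nonempty with hcompl | hne
    · rw [Set.compl_empty_iff.mp hcompl]
      exact fun m hm => ⟨m, hm, fun _ _ => rfl⟩
    obtain ⟨x, hx⟩ := Jᶜ.toFinite.exists_maximal hne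
    have hxJ := Ioi_subset_of_maximal_compl hx
    exact (ih _ (Set.ssubset_insert hx.1) (hJ.insert hxJ)).trans
      (restrictionSurjective_insert (h x) hJ hx.1 hxJ) (Set.subset_insert x J)

end

section

variable (k : Type) [CommRing k] {V : Type} [PartialOrder V] [Fintype V] {r : ℕ}
  (G : DirMomentGraph V r)
  (MV : V → Type) [∀ x, AddCommGroup (MV x)] [∀ x, Module (MvPolynomial (Fin r) k) (MV x)]
  (ME : G.E → Type) [∀ e, AddCommGroup (ME e)] [∀ e, Module (MvPolynomial (Fin r) k) (ME e)]
  (ρs : ∀ e : G.E, MV (G.src e) →ₗ[MvPolynomial (Fin r) k] ME e)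
  (ρt : ∀ e : G.E, MV (G.tgt e) →ₗ[MvPolynomial (Fin r) k] ME e)

/-- For a sheaf `M` on a directed moment graph the following are equivalent:
(1) for all open `J' ⊆ J` the restriction `Γ(J,M) → Γ(J',M)` is surjective;
(2) for every vertex `x` the restriction `Γ({≥x},M) → Γ({>x},M)` is surjective;
(3) for every vertex `x` the image of `d_x : M^x → ⊕_{E ∈ E_{δx}} M^E` contains
`M^{δx} = u_x(Γ({>x},M))`. -/
theorem extension_tfae :
    ((∀ J J' : Set V, IsOpenSubset J → IsOpenSubset J' → J' ⊆ J →
        ∀ m' ∈ sections k G MV ME ρs ρt J', ∃ m ∈ sections k G MV ME ρs ρt J,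
          ∀ y ∈ J', m y = m' y) ↔
      (∀ x : V, ∀ m' ∈ sections k G MV ME ρs ρt {y | x < y},
        ∃ m ∈ sections k G MV ME ρs ρt {y | x ≤ y}, ∀ y, x < y → m y = m' y)) ∧
    ((∀ x : V, ∀ m' ∈ sections k G MV ME ρs ρt {y | x < y},
        ∃ m ∈ sections k G MV ME ρs ρt {y | x ≤ y}, ∀ y, x < y → m y = m' y) ↔
      (∀ x : V, ∀ m' ∈ sections k G MV ME ρs ρt {y | x < y}, ∃ a : MV x,
        ∀ (e : G.E) (h : G.src e = x),
          ρs e (cast (congrArg MV h.symm) a) = ρt e (m' (G.tgt e)))) := by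
  have of_edgeCompatible (h3 : ∀ x, ∀ m ∈ sections k G MV ME ρs ρt (Set.Ioi x),
      ∃ a, EdgeCompatible k G MV ME ρs ρt x a m) (J J' : Set V) (hJ' : IsOpenSubset J') :
      RestrictionSurjective k G MV ME ρs ρt J J' :=
    (restrictionSurjective_univ h3 hJ').of_superset (Set.subset_univ J)
  refine ⟨⟨fun h1 x => ?_, fun h2 J J' _ hJ' _ => ?_⟩, ⟨fun h2 x => ?_, fun h3 x => ?_⟩⟩
  · exact h1 _ _ (isOpenSubset_Ici x) (isOpenSubset_Ioi x) Set.Ioi_subset_Ici_self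
  · exact of_edgeCompatible (fun x => RestrictionSurjective.exists_edgeCompatible (h2 x)) J J' hJ'
  · exact RestrictionSurjective.exists_edgeCompatible (h2 x)
  · exact of_edgeCompatible h3 _ _ (isOpenSubset_Ioi x)

end
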